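/- Let d ≥ 1, let 0 ≤ L ≤ L̄ with L̄ > 0, let θ ≥ 1, s₀ ≥ 0, let (g_k)_{k≥0} be vectors in ℝ^d with ‖g_k‖ ≤ Ld for all k, let (r̄_k)_{k≥0} be a positive nondecreasing sequence, and let ζ ∈ ℕ ∪ {∞} be such that r̄_k ≤ 3 s₀ for all k < ζ. Define G_{−1} = 0, G_k = Σ_{i=0}^{k} ‖g_i‖², G'_k = 8⁴ θ (log(k+2)+1)² (G_{k−1} + 16 θ d² L̄²), η̃_k = (r̄_k / √(G'_k)) · 1[k < ζ], and μ_k = d r̄_k / (k+1)². Let f : ℝ^d → ℝ be convex and L-Lipschitz, let X ⊆ ℝ^d, let x★ ∈ X satisfy f(x★) ≤ f(x) for all x ∈ X, and let x_k ∈ X for all k. Then for every t ≥ 0: Σ_{k=0}^{t} η̃_k ⟨∇f_{μ_k}(x_k), x★ − x_k⟩ ≤ s₀² / 4. -/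

import Mathlib

open MeasureTheory Metric Finset
open scoped RealInnerProductSpace

/-- The uniform probability measure on the closed Euclidean unit ball in `ℝ^d`. -/
noncomputable def ballUniform (d : ℕ) : Measure (EuclideanSpace ℝ (Fin d)) :=
  (volume (Metric.closedBall (0 : EuclideanSpace ℝ (Fin d)) 1))⁻¹ •
    volume.restrict (Metric.closedBall 0 1)

/-- The ball-smoothed function `f_μ(x) = E_{u ∼ U(B^d)} [f (x + μ u)]`. -/
noncomputable def smoothed (d : ℕ) (f : EuclideanSpace ℝ (Fin d) → ℝ) (μ : ℝ)
    (x : EuclideanSpace ℝ (Fin d)) : ℝ :=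
  ∫ u, f (x + μ • u) ∂(ballUniform d)

/-- The uniform (rotation-invariant) probability measure on the unit sphere `S^{d-1}`,
realized as the pushforward of the uniform measure on the unit ball under radial
normalization `u ↦ u / ‖u‖`. -/
noncomputable def sphereUniform (d : ℕ) : Measure (EuclideanSpace ℝ (Fin d)) :=
  (ballUniform d).map (fun u => ‖u‖⁻¹ • u)

/-!
Convexity of `f_μ` gives `⟪∇f_μ(x_k), x★ - x_k⟫ ≤ f_μ(x★) - f_μ(x_k)`, and since
`|f_μ - f| ≤ L μ` and `f(x★) ≤ f(x_k)`, this is at most `2 L μ_k`. As `G'_k ≥ (256 d L̄)²`,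
the `k`-th term is at most `L r̄_k² / (128 L̄ (k+1)²) ≤ 9 s₀² / (128 (k+1)²)`,
and `∑ 1/(k+1)² ≤ π²/6 < 2`.
-/

open ProbabilityTheory
open scoped NNReal

theorem ConvexOn.inner_gradient_le_sub {E : Type*} [NormedAddCommGroup E] [InnerProductSpace ℝ E]
    [CompleteSpace E] {g : E → ℝ} (hg : ConvexOn ℝ Set.univ g) {x : E} (y : E)
    (hdiff : DifferentiableAt ℝ g x) :
    ⟪gradient g x, y - x⟫ ≤ g y - g x := by
  let ℓ : ℝ →ᵃ[ℝ] E := AffineMap.lineMap x y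
  have hline : ConvexOn ℝ Set.univ (g ∘ ℓ) := hg.comp_affineMap ℓ
  have hderiv : HasDerivAt (g ∘ ℓ) ⟪gradient g x, y - x⟫ 0 := by
    have hg' : HasFDerivAt g (InnerProductSpace.toDual ℝ E (gradient g x)) (ℓ 0) := by
      simpa [ℓ] using hdiff.hasGradientAt.hasFDerivAt
    simpa using hg'.comp_hasDerivAt (0 : ℝ) AffineMap.hasDerivAt_lineMap
  simpa [slope, ℓ] using
    hline.le_slope_of_hasDerivAt (Set.mem_univ 0) (Set.mem_univ 1) one_pos hderiv

section Smoothing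

variable {d : ℕ}

instance : IsProbabilityMeasure (ballUniform d) :=
  cond_isProbabilityMeasure_of_finite (measure_closedBall_pos _ _ one_pos).ne'
    measure_closedBall_lt_top.ne

theorem ae_norm_le_one_ballUniform : ∀ᵐ u ∂ballUniform d, ‖u‖ ≤ 1 := by
  filter_upwards [ae_cond_mem measurableSet_closedBall] with u hu
  simpa using hu

variable {f : EuclideanSpace ℝ (Fin d) → ℝ} {K : ℝ≥0}

theorem LipschitzWith.norm_comp_add_smul_sub_le (hf : LipschitzWith K f)
    (x : EuclideanSpace ℝ (Fin d)) (c : ℝ) {u : EuclideanSpace ℝ (Fin d)} (hu : ‖u‖ ≤ 1) :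
    ‖f (x + c • u) - f x‖ ≤ K * |c| := by
  calc ‖f (x + c • u) - f x‖ ≤ K * ‖c • u‖ := by
        simpa [dist_eq_norm] using hf.dist_le_mul (x + c • u) x
    _ ≤ K * |c| := by
      gcongr
      rw [norm_smul, Real.norm_eq_abs]
      exact mul_le_of_le_one_right (abs_nonneg c) hu

theorem integrable_comp_add_smul_ballUniform (hf : LipschitzWith K f)
    (x : EuclideanSpace ℝ (Fin d)) (c : ℝ) :
    Integrable (fun u => f (x + c • u)) (ballUniform d) := by
  refine Integrable.of_bound (hf.continuous.comp (by fun_prop)).aestronglyMeasurable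
    (‖f x‖ + K * |c|) ?_
  filter_upwards [ae_norm_le_one_ballUniform] with u hu
  have := hf.norm_comp_add_smul_sub_le x c hu
  have := norm_sub_norm_le (f (x + c • u)) (f x)
  linarith

theorem abs_smoothed_sub_le (hf : LipschitzWith K f) (x : EuclideanSpace ℝ (Fin d)) (c : ℝ) :
    |smoothed d f c x - f x| ≤ K * |c| := by
  have hsub : smoothed d f c x - f x = ∫ u, (f (x + c • u) - f x) ∂ballUniform d := by
    rw [integral_sub (integrable_comp_add_smul_ballUniform hf x c) (integrable_const _),
      integral_const, probReal_univ, one_smul, smoothed]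
  rw [hsub]
  simpa using norm_integral_le_of_norm_le_const
    (ae_norm_le_one_ballUniform.mono fun u hu => hf.norm_comp_add_smul_sub_le x c hu)

theorem convexOn_smoothed (hf : LipschitzWith K f) (hconv : ConvexOn ℝ Set.univ f) (c : ℝ) :
    ConvexOn ℝ Set.univ (smoothed d f c) := by
  refine ⟨convex_univ, fun x _ y _ a b ha hb hab => ?_⟩
  have hix := (integrable_comp_add_smul_ballUniform hf x c).const_mul a
  have hiy := (integrable_comp_add_smul_ballUniform hf y c).const_mul b
  calc smoothed d f c (a • x + b • y)
      ≤ ∫ u, (a * f (x + c • u) + b * f (y + c • u)) ∂ballUniform d := by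
        refine integral_mono (integrable_comp_add_smul_ballUniform hf _ c) (hix.add hiy)
          fun u => ?_
        have hcomb : a • x + b • y + c • u = a • (x + c • u) + b • (y + c • u) := by
          rw [smul_add, smul_add, add_add_add_comm, ← add_smul, hab, one_smul]
        simpa only [hcomb, smul_eq_mul] using
          hconv.2 (Set.mem_univ _) (Set.mem_univ _) ha hb hab
    _ = a • smoothed d f c x + b • smoothed d f c y := by
        rw [integral_add hix hiy, integral_const_mul, integral_const_mul]
        rfl

theorem inner_gradient_smoothed_le (hf : LipschitzWith K f) (hconv : ConvexOn ℝ Set.univ f)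
    {x y : EuclideanSpace ℝ (Fin d)} (hyx : f y ≤ f x) {c : ℝ} (hc : 0 ≤ c) :
    ⟪gradient (smoothed d f c) x, y - x⟫ ≤ 2 * K * c := by
  by_cases hdiff : DifferentiableAt ℝ (smoothed d f c) x
  · have hx := abs_le.1 (abs_smoothed_sub_le hf x c)
    have hy := abs_le.1 (abs_smoothed_sub_le hf y c)
    rw [abs_of_nonneg hc] at hx hy
    linarith [(convexOn_smoothed hf hconv c).inner_gradient_le_sub y hdiff]
  · rw [gradient_eq_zero_of_not_differentiableAt hdiff, inner_zero_left]
    positivity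

end Smoothing

theorem sum_range_one_div_succ_sq_le_two (n : ℕ) :
    ∑ k ∈ range n, 1 / ((k : ℝ) + 1) ^ 2 ≤ 2 := by
  have hshift :
      ∑ k ∈ range n, 1 / ((k : ℝ) + 1) ^ 2 = ∑ k ∈ range (n + 1), 1 / (k : ℝ) ^ 2 := by
    rw [sum_range_succ']
    simp
  rw [hshift]
  calc _ ≤ Real.pi ^ 2 / 6 := sum_le_hasSum _ (fun k _ => by positivity) hasSum_zeta_two
    _ ≤ 2 := by nlinarith [Real.pi_lt_d2, Real.pi_pos]

theorem sq_mul_sq_le_gradNormDenominator {θ : ℝ} (hθ : 1 ≤ θ) (k : ℕ) {S : ℝ} (hS : 0 ≤ S)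
    (D Lbar : ℝ) :
    256 ^ 2 * (D ^ 2 * Lbar ^ 2) ≤
      8 ^ 4 * θ * (Real.log ((k : ℝ) + 2) + 1) ^ 2 * (S + 16 * θ * D ^ 2 * Lbar ^ 2) := by
  have hlog : 0 ≤ Real.log ((k : ℝ) + 2) :=
    Real.log_nonneg (by linarith [k.cast_nonneg (α := ℝ)])
  have hθA : 1 ≤ θ * (Real.log ((k : ℝ) + 2) + 1) ^ 2 := by nlinarith
  calc 256 ^ 2 * (D ^ 2 * Lbar ^ 2) = 8 ^ 4 * 1 * (16 * (D ^ 2 * Lbar ^ 2)) := by ring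
    _ ≤ 8 ^ 4 * (θ * (Real.log ((k : ℝ) + 2) + 1) ^ 2) * (S + 16 * θ * (D ^ 2 * Lbar ^ 2)) := by
      gcongr; nlinarith [sq_nonneg (D * Lbar)]
    _ = _ := by ring

theorem div_sqrt_mul_smoothing_le {L Lbar D r s0 G n : ℝ} (hL : 0 ≤ L) (hLLbar : L ≤ Lbar)
    (hLbar : 0 < Lbar) (hr : 0 < r) (hrs : r ≤ 3 * s0)
    (hG : 256 ^ 2 * (D ^ 2 * Lbar ^ 2) ≤ G) (hn : 0 ≤ n) :
    r / √G * (2 * L * (D * r / n)) ≤ 9 * s0 ^ 2 / 128 * (1 / n) := by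
  have hDG : D / √G ≤ 1 / (256 * Lbar) := by
    refine div_le_of_le_mul₀ (Real.sqrt_nonneg G) (by positivity) ?_
    rw [one_div_mul_eq_div, le_div_iff₀ (by positivity)]
    exact Real.le_sqrt_of_sq_le (by linarith)
  have hLr : L * r ^ 2 ≤ Lbar * (9 * s0 ^ 2) :=
    mul_le_mul hLLbar (by nlinarith) (sq_nonneg r) hLbar.le
  calc r / √G * (2 * L * (D * r / n)) = D / √G * (2 * L * r ^ 2 / n) := by ring
    _ ≤ 1 / (256 * Lbar) * (2 * L * r ^ 2 / n) := by gcongr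
    _ = L * r ^ 2 / Lbar / 128 * (1 / n) := by field_simp; ring
    _ ≤ 9 * s0 ^ 2 / 128 * (1 / n) := by
      gcongr
      rwa [div_le_iff₀ hLbar, mul_comm _ Lbar]

theorem stmt17_general (d : ℕ) (L Lbar : ℝ) (hL : 0 ≤ L) (hLLbar : L ≤ Lbar)
    (hLbar : 0 < Lbar) (θ : ℝ) (hθ : 1 ≤ θ) (s0 : ℝ)
    (g : ℕ → EuclideanSpace ℝ (Fin d))
    (rbar : ℕ → ℝ) (hrpos : ∀ k, 0 < rbar k)
    (ζ : ℕ∞) (hζ : ∀ k : ℕ, (k : ℕ∞) < ζ → rbar k ≤ 3 * s0)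
    (G' : ℕ → ℝ)
    (hG' : ∀ k : ℕ, G' k = 8 ^ 4 * θ * (Real.log ((k : ℝ) + 2) + 1) ^ 2 *
      ((∑ i ∈ Finset.range k, ‖g i‖ ^ 2) + 16 * θ * (d : ℝ) ^ 2 * Lbar ^ 2))
    (ηt : ℕ → ℝ)
    (hηt : ∀ k : ℕ, ηt k = if (k : ℕ∞) < ζ then rbar k / Real.sqrt (G' k) else 0)
    (μ : ℕ → ℝ) (hμ : ∀ k : ℕ, μ k = (d : ℝ) * rbar k / ((k : ℝ) + 1) ^ 2)
    (f : EuclideanSpace ℝ (Fin d) → ℝ)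
    (hconv : ConvexOn ℝ Set.univ f)
    (hlip : ∀ x y, |f x - f y| ≤ L * ‖x - y‖)
    (X : Set (EuclideanSpace ℝ (Fin d)))
    (xstar : EuclideanSpace ℝ (Fin d))
    (hmin : ∀ x ∈ X, f xstar ≤ f x)
    (x : ℕ → EuclideanSpace ℝ (Fin d)) (hx : ∀ k, x k ∈ X)
    (t : ℕ) :
    ∑ k ∈ Finset.range (t + 1),
        ηt k * ⟪gradient (smoothed d f (μ k)) (x k), xstar - x k⟫ ≤ s0 ^ 2 / 4 := by
  have hf : LipschitzWith L.toNNReal f := LipschitzWith.of_dist_le' fun a b => by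
    simpa [Real.dist_eq, dist_eq_norm] using hlip a b
  have hterm : ∀ k, ηt k * ⟪gradient (smoothed d f (μ k)) (x k), xstar - x k⟫ ≤
      9 * s0 ^ 2 / 128 * (1 / ((k : ℝ) + 1) ^ 2) := by
    intro k
    have hμk : 0 ≤ μ k := by rw [hμ k]; have := hrpos k; positivity
    have hgrad := inner_gradient_smoothed_le hf hconv (hmin _ (hx k)) hμk
    rw [Real.coe_toNNReal L hL] at hgrad
    rw [hηt k]
    split_ifs with hk
    · have hG : 256 ^ 2 * ((d : ℝ) ^ 2 * Lbar ^ 2) ≤ G' k :=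
        hG' k ▸ sq_mul_sq_le_gradNormDenominator hθ k (sum_nonneg fun i _ => sq_nonneg ‖g i‖) _ _
      calc _ ≤ rbar k / √(G' k) * (2 * L * μ k) := by have := hrpos k; gcongr
        _ ≤ _ := by
          rw [hμ k]
          exact div_sqrt_mul_smoothing_le hL hLLbar hLbar (hrpos k) (hζ k hk) hG
            (by positivity)
    · rw [zero_mul]
      positivity
  calc ∑ k ∈ range (t + 1), ηt k * ⟪gradient (smoothed d f (μ k)) (x k), xstar - x k⟫
      ≤ ∑ k ∈ range (t + 1), 9 * s0 ^ 2 / 128 * (1 / ((k : ℝ) + 1) ^ 2) :=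
        sum_le_sum fun k _ => hterm k
    _ = 9 * s0 ^ 2 / 128 * ∑ k ∈ range (t + 1), 1 / ((k : ℝ) + 1) ^ 2 := (mul_sum ..).symm
    _ ≤ 9 * s0 ^ 2 / 128 * 2 := by gcongr; exact sum_range_one_div_succ_sq_le_two _
    _ ≤ s0 ^ 2 / 4 := by nlinarith [sq_nonneg s0]

theorem stmt17 (d : ℕ) (hd : 1 ≤ d) (L Lbar : ℝ) (hL : 0 ≤ L) (hLLbar : L ≤ Lbar)
    (hLbar : 0 < Lbar) (θ : ℝ) (hθ : 1 ≤ θ) (s0 : ℝ) (hs0 : 0 ≤ s0)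
    (g : ℕ → EuclideanSpace ℝ (Fin d)) (hg : ∀ k, ‖g k‖ ≤ L * d)
    (rbar : ℕ → ℝ) (hrpos : ∀ k, 0 < rbar k) (hrmono : Monotone rbar)
    (ζ : ℕ∞) (hζ : ∀ k : ℕ, (k : ℕ∞) < ζ → rbar k ≤ 3 * s0)
    (G' : ℕ → ℝ)
    (hG' : ∀ k : ℕ, G' k = 8 ^ 4 * θ * (Real.log ((k : ℝ) + 2) + 1) ^ 2 *
      ((∑ i ∈ Finset.range k, ‖g i‖ ^ 2) + 16 * θ * (d : ℝ) ^ 2 * Lbar ^ 2))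
    (ηt : ℕ → ℝ)
    (hηt : ∀ k : ℕ, ηt k = if (k : ℕ∞) < ζ then rbar k / Real.sqrt (G' k) else 0)
    (μ : ℕ → ℝ) (hμ : ∀ k : ℕ, μ k = (d : ℝ) * rbar k / ((k : ℝ) + 1) ^ 2)
    (f : EuclideanSpace ℝ (Fin d) → ℝ)
    (hconv : ConvexOn ℝ Set.univ f)
    (hlip : ∀ x y, |f x - f y| ≤ L * ‖x - y‖)
    (X : Set (EuclideanSpace ℝ (Fin d)))
    (xstar : EuclideanSpace ℝ (Fin d)) (hxstar : xstar ∈ X)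
    (hmin : ∀ x ∈ X, f xstar ≤ f x)
    (x : ℕ → EuclideanSpace ℝ (Fin d)) (hx : ∀ k, x k ∈ X)
    (t : ℕ) :
    ∑ k ∈ Finset.range (t + 1),
        ηt k * ⟪gradient (smoothed d f (μ k)) (x k), xstar - x k⟫ ≤ s0 ^ 2 / 4 :=
  stmt17_general d L Lbar hL hLLbar hLbar θ hθ s0 g rbar hrpos ζ hζ G' hG' ηt hηt μ hμ f hconv hlip
    X xstar hmin x hx t
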